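/- Let (S_n) be a sequence of p×p symmetric positive definite real matrices (indexed by pairs) converging entrywise to a symmetric positive definite matrix Σ. Suppose that for each n, K_n is a separable positive definite matrix minimizing d(K' : S_n) over all separable positive definite p×p matrices K', and that K is the unique separable positive definite matrix minimizing d(K' : Σ) over all separable positive definite matrices K'. Then K_n converges entrywise to K. -/

import Mathlib

open Matrix BigOperators Filter

/-- The separable (Kronecker) product `M2 ⊛ M1`: entry at `((i,j),(i',j'))` is
`M1 i i' * M2 j j'`. -/
noncomputable def sep {p1 p2 : ℕ} (M1 : Matrix (Fin p1) (Fin p1) ℝ)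
    (M2 : Matrix (Fin p2) (Fin p2) ℝ) :
    Matrix (Fin p1 × Fin p2) (Fin p1 × Fin p2) ℝ :=
  fun x y => M1 x.1 y.1 * M2 x.2 y.2

/-- A `p × p` matrix is separable positive definite if it is the separable product of
two symmetric positive definite matrices. -/
def SepPD {p1 p2 : ℕ} (K : Matrix (Fin p1 × Fin p2) (Fin p1 × Fin p2) ℝ) : Prop :=
  ∃ (S1 : Matrix (Fin p1) (Fin p1) ℝ) (S2 : Matrix (Fin p2) (Fin p2) ℝ),
    S1.PosDef ∧ S2.PosDef ∧ K = sep S1 S2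

/-- The divergence `d(K : S) = log det K + trace (K⁻¹ S)`. -/
noncomputable def dvg {ι : Type*} [Fintype ι] [DecidableEq ι] (K S : Matrix ι ι ℝ) : ℝ :=
  Real.log K.det + (K⁻¹ * S).trace

/-- `P1 S B` has entries `∑_{j,j'} B j j' * S (i,j) (i',j')`. -/
noncomputable def P1 {p1 p2 : ℕ} (S : Matrix (Fin p1 × Fin p2) (Fin p1 × Fin p2) ℝ)
    (B : Matrix (Fin p2) (Fin p2) ℝ) : Matrix (Fin p1) (Fin p1) ℝ :=
  fun i i' => ∑ j, ∑ j', B j j' * S (i, j) (i', j')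

/-- `P2 S A` has entries `∑_{i,i'} A i i' * S (i,j) (i',j')`. -/
noncomputable def P2 {p1 p2 : ℕ} (S : Matrix (Fin p1 × Fin p2) (Fin p1 × Fin p2) ℝ)
    (A : Matrix (Fin p1) (Fin p1) ℝ) : Matrix (Fin p2) (Fin p2) ℝ :=
  fun j j' => ∑ i, ∑ i', A i i' * S (i, j) (i', j')

/-!
A minimiser `K` of `d(· : S)` satisfies `d(K : S) ≤ d(Klim : S)`, and once `S` is close to `Σ ≥ c I`
this bounds `log det K + (c/2) tr K⁻¹ = ∑ᵢ (log λᵢ + c / (2 λᵢ))` over the eigenvalues `λᵢ` of `K`.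
Each summand is coercive on `(0, ∞)`, so the `K n` eventually lie in a compact set of positive
definite matrices. A cluster point `L` of `K n` is again separable, because for positive definite
`K` separability is the closed condition `tr K • K = tr₂ K ⊗ tr₁ K` on partial traces, and it
minimises `d(· : Σ)` by continuity of `d` at `(L, Σ)`; uniqueness forces `L = Klim`.
-/

open Topology Real
open scoped Kronecker MatrixOrder

lemma one_add_log_le_log_add_div {c t : ℝ} (hc : 0 < c) (ht : 0 < t) :
    1 + log c ≤ log t + c / t := by
  have h := log_le_sub_one_of_pos (div_pos hc ht)
  rw [log_div hc.ne' ht.ne'] at h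
  linarith

lemma exists_bounds_of_log_add_div_le {c : ℝ} (hc : 0 < c) (C : ℝ) :
    ∃ a > 0, ∃ b, ∀ t > 0, log t + c / t ≤ C → a ≤ t ∧ t ≤ b := by
  -- `log t ≥ 1 + log (c / 2) - c / (2 t)` leaves `c / (2 t) ≤ C'` from the hypothesis
  set C' := C - 1 - log (c / 2)
  refine ⟨c / (2 * max C' 1), by positivity, exp C, fun t ht h => ⟨?_, ?_⟩⟩
  · have hsplit : c / t = c / 2 / t + c / 2 / t := by ring
    have hhalf : c / 2 / t ≤ max C' 1 := le_max_of_le_left <| by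
      linarith [one_add_log_le_log_add_div (half_pos hc) ht]
    rw [div_le_iff₀ ht] at hhalf
    rw [div_le_iff₀ (by positivity)]
    linarith
  · exact (log_le_iff_le_exp ht).mp (by linarith [div_pos hc ht])

namespace Matrix

section PosSemidef

variable {m : Type*} [Fintype m]

lemma PosSemidef.two_mul_abs_apply_le {A : Matrix m m ℝ} (hA : A.PosSemidef) (i j : m) :
    2 * |A i j| ≤ A i i + A j j := by
  classical
  have hsym : A j i = A i j := hA.isHermitian.apply i j
  have hquad (t : ℝ) : 0 ≤ A i i + 2 * t * A i j + t ^ 2 * A j j := by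
    have := hA.dotProduct_mulVec_nonneg (Pi.single i 1 + Pi.single j t)
    simp only [star_trivial, mulVec_add, mulVec_single, MulOpposite.op_one, one_smul,
      op_smul_eq_smul, dotProduct_add, add_dotProduct, single_dotProduct, col_apply, one_mul, hsym,
      dotProduct_smul, smul_eq_mul] at this
    nlinarith
  have h₁ := hquad 1
  have h₂ := hquad (-1)
  rcases abs_cases (A i j) with ⟨h, _⟩ | ⟨h, _⟩ <;> rw [h] <;> linarith

lemma PosSemidef.abs_apply_le_trace {A : Matrix m m ℝ} (hA : A.PosSemidef) (i j : m) :
    |A i j| ≤ A.trace := by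
  have hdiag : ∀ k, A k k ≤ A.trace := fun k =>
    Finset.single_le_sum (f := A.diag) (fun l _ => hA.diag_nonneg) (Finset.mem_univ k)
  linarith [hA.two_mul_abs_apply_le i j, hdiag i, hdiag j]

lemma isClosed_setOf_posSemidef : IsClosed {A : Matrix m m ℝ | A.PosSemidef} := by
  simp only [posSemidef_iff_dotProduct_mulVec, Set.ofPred_and, Set.ofPred_forall]
  refine .inter (isClosed_eq (by fun_prop) continuous_id) (isClosed_iInter fun x => ?_)
  exact isClosed_le continuous_const (by fun_prop)

lemma PosSemidef.abs_trace_mul_le {A E : Matrix m m ℝ} (hA : A.PosSemidef) {ε : ℝ}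
    (hE : ∀ i j, |E i j| ≤ ε) : |(A * E).trace| ≤ Fintype.card m ^ 2 * ε * A.trace := by
  calc |(A * E).trace| ≤ ∑ i, ∑ j, |A i j * E j i| :=
        (Finset.abs_sum_le_sum_abs _ _).trans
          (Finset.sum_le_sum fun i _ => Finset.abs_sum_le_sum_abs _ _)
    _ ≤ ∑ _i : m, ∑ _j : m, A.trace * ε := by
      gcongr with i _ j _
      rw [abs_mul]
      exact mul_le_mul (hA.abs_apply_le_trace i j) (hE j i) (abs_nonneg _) hA.trace_nonneg
    _ = Fintype.card m ^ 2 * ε * A.trace := by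
      simp only [Finset.sum_const, Finset.card_univ, nsmul_eq_mul]
      ring

variable [DecidableEq m]

lemma PosSemidef.trace_mul_nonneg {A B : Matrix m m ℝ} (hA : A.PosSemidef) (hB : B.PosSemidef) :
    0 ≤ (A * B).trace := by
  obtain ⟨b, rfl⟩ := CStarAlgebra.nonneg_iff_eq_star_mul_self.mp hB.nonneg
  rw [← mul_assoc, trace_mul_cycle, star_eq_conjTranspose]
  exact (hA.mul_mul_conjTranspose_same b).trace_nonneg

lemma PosDef.exists_pos_sub_smul_one_posSemidef [Nonempty m] {A : Matrix m m ℝ} (hA : A.PosDef) :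
    ∃ c : ℝ, 0 < c ∧ (A - c • 1).PosSemidef := by
  obtain ⟨c, hc, hle⟩ := (CFC.exists_pos_algebraMap_le_iff hA.isHermitian.isSelfAdjoint).mpr
    fun x hx => by
      rw [hA.isHermitian.spectrum_real_eq_range_eigenvalues] at hx
      obtain ⟨i, rfl⟩ := hx
      exact hA.eigenvalues_pos i
  exact ⟨c, hc, by rwa [le_iff, Algebra.algebraMap_eq_smul_one] at hle⟩

lemma IsHermitian.trace_cfc {A : Matrix m m ℝ} (hA : A.IsHermitian) (f : ℝ → ℝ) :
    (cfc f A).trace = ∑ i, f (hA.eigenvalues i) := by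
  rw [hA.cfc_eq, IsHermitian.cfc, Unitary.conjStarAlgAut_apply, trace_mul_cycle,
    Unitary.coe_star_mul_self, one_mul, trace_diagonal]
  simp

lemma PosDef.trace_inv {K : Matrix m m ℝ} (hK : K.PosDef) :
    K⁻¹.trace = ∑ i, (hK.1.eigenvalues i)⁻¹ := by
  rw [← hK.1.trace_cfc, ← hK.isUnit.unit_spec,
    cfc_inv_id (R := ℝ) hK.isUnit.unit hK.1.isSelfAdjoint, coe_units_inv]

lemma PosDef.log_det {K : Matrix m m ℝ} (hK : K.PosDef) :
    log K.det = ∑ i, log (hK.1.eigenvalues i) := by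
  rw [hK.1.det_eq_prod_eigenvalues]
  exact log_prod fun i _ => (hK.eigenvalues_pos i).ne'

lemma exists_eigenvalues_mem_Icc_of_log_det_add_trace_inv_le {c : ℝ} (hc : 0 < c) (D : ℝ) :
    ∃ a > 0, ∃ b, ∀ K : Matrix m m ℝ, (hK : K.PosDef) → log K.det + c * K⁻¹.trace ≤ D →
      ∀ i, hK.1.eigenvalues i ∈ Set.Icc a b := by
  -- every summand of `∑ i, (log λᵢ + c / λᵢ)` is at least `1 + log c`
  obtain ⟨a, ha, b, hab⟩ :=
    exists_bounds_of_log_add_div_le hc (D - (Fintype.card m - 1) * (1 + log c))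
  refine ⟨a, ha, b, fun K hK hD i => hab _ (hK.eigenvalues_pos i) ?_⟩
  set f : m → ℝ := fun j => log (hK.1.eigenvalues j) + c / hK.1.eigenvalues j
  have hsum : ∑ j, f j ≤ D := by
    simpa [f, hK.log_det, hK.trace_inv, Finset.sum_add_distrib, Finset.mul_sum, div_eq_mul_inv]
      using hD
  have hrest : (Fintype.card m - 1) * (1 + log c) ≤ ∑ j ∈ Finset.univ.erase i, f j := by
    have := Finset.card_nsmul_le_sum (Finset.univ.erase i) f (1 + log c)
      fun j _ => one_add_log_le_log_add_div hc (hK.eigenvalues_pos j)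
    rwa [Finset.card_erase_of_mem (Finset.mem_univ i), nsmul_eq_mul, Finset.card_univ,
      Nat.cast_pred (Fintype.card_pos_iff.mpr ⟨i⟩)] at this
  linarith [Finset.add_sum_erase Finset.univ f (Finset.mem_univ i)]

lemma isCompact_setOf_posSemidef_le_det_trace_le (δ R : ℝ) :
    IsCompact {M : Matrix m m ℝ | M.PosSemidef ∧ δ ≤ M.det ∧ M.trace ≤ R} := by
  have hbox : IsCompact (Set.univ.pi fun _ : m => Set.univ.pi fun _ : m => Set.Icc (-R) R) :=
    isCompact_univ_pi fun _ => isCompact_univ_pi fun _ => isCompact_Icc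
  refine hbox.of_isClosed_subset ?_ fun M ⟨hM, _, htr⟩ i _ j _ =>
    abs_le.mp ((hM.abs_apply_le_trace i j).trans htr)
  exact isClosed_setOf_posSemidef.inter
    ((isClosed_le continuous_const continuous_id.matrix_det).inter
      (isClosed_le continuous_id.matrix_trace continuous_const))

lemma exists_isCompact_posDef_of_log_det_add_trace_inv_le {c : ℝ} (hc : 0 < c) (D : ℝ) :
    ∃ s : Set (Matrix m m ℝ), IsCompact s ∧ (∀ M ∈ s, M.PosDef) ∧
      ∀ K : Matrix m m ℝ, K.PosDef → log K.det + c * K⁻¹.trace ≤ D → K ∈ s := by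
  obtain ⟨a, ha, b, hab⟩ := exists_eigenvalues_mem_Icc_of_log_det_add_trace_inv_le (m := m) hc D
  refine ⟨_, isCompact_setOf_posSemidef_le_det_trace_le (a ^ Fintype.card m)
    (Fintype.card m * b), fun M ⟨hM, hdet, _⟩ =>
      hM.posDef_iff_det_ne_zero.mpr ((pow_pos ha _).trans_le hdet).ne', fun K hK hD => ?_⟩
  have hbd := hab K hK hD
  refine ⟨hK.posSemidef, ?_, ?_⟩
  · rw [hK.1.det_eq_prod_eigenvalues]
    have := Finset.prod_le_prod (s := Finset.univ) (fun i _ => ha.le) fun i _ => (hbd i).1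
    rwa [Finset.prod_const, Finset.card_univ] at this
  · rw [hK.1.trace_eq_sum_eigenvalues]
    simpa using Finset.sum_le_card_nsmul Finset.univ _ b fun i _ => (hbd i).2

end PosSemidef

variable {R m n : Type*}

def traceSnd [Fintype n] [AddCommMonoid R] (M : Matrix (m × n) (m × n) R) : Matrix m m R :=
  of fun i i' => ∑ j, M (i, j) (i', j)

def traceFst [Fintype m] [AddCommMonoid R] (M : Matrix (m × n) (m × n) R) : Matrix n n R :=
  of fun j j' => ∑ i, M (i, j) (i, j')

lemma traceSnd_kronecker [Fintype n] [CommSemiring R] (A : Matrix m m R) (B : Matrix n n R) :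
    traceSnd (A ⊗ₖ B) = B.trace • A := by
  ext i i'
  simp [traceSnd, trace, ← Finset.mul_sum, mul_comm]

lemma traceFst_kronecker [Fintype m] [CommSemiring R] (A : Matrix m m R) (B : Matrix n n R) :
    traceFst (A ⊗ₖ B) = A.trace • B := by
  ext j j'
  simp [traceFst, trace, Finset.sum_mul]

lemma continuous_traceSnd [Fintype n] [AddCommMonoid R] [TopologicalSpace R] [ContinuousAdd R] :
    Continuous (traceSnd : Matrix (m × n) (m × n) R → Matrix m m R) :=
  continuous_matrix fun _ _ => continuous_finsetSum _ fun _ _ => continuous_apply_apply _ _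

lemma continuous_traceFst [Fintype m] [AddCommMonoid R] [TopologicalSpace R] [ContinuousAdd R] :
    Continuous (traceFst : Matrix (m × n) (m × n) R → Matrix n n R) :=
  continuous_matrix fun _ _ => continuous_finsetSum _ fun _ _ => continuous_apply_apply _ _

lemma PosDef.traceSnd [Fintype n] [Nonempty n] {M : Matrix (m × n) (m × n) ℝ} (hM : M.PosDef) :
    M.traceSnd.PosDef := by
  have : M.traceSnd = ∑ j, M.submatrix (·, j) (·, j) := by ext; simp [Matrix.traceSnd, sum_apply]
  rw [this]
  exact posDef_sum Finset.univ_nonempty fun j _ =>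
    hM.submatrix fun i i' h => (Prod.mk.inj h).1

lemma PosDef.traceFst [Fintype m] [Nonempty m] {M : Matrix (m × n) (m × n) ℝ} (hM : M.PosDef) :
    M.traceFst.PosDef := by
  have : M.traceFst = ∑ i, M.submatrix (i, ·) (i, ·) := by ext; simp [Matrix.traceFst, sum_apply]
  rw [this]
  exact posDef_sum Finset.univ_nonempty fun i _ =>
    hM.submatrix fun j j' h => (Prod.mk.inj h).2

lemma kronecker_traceSnd_traceFst [Fintype m] [Fintype n] [CommSemiring R]
    (A : Matrix m m R) (B : Matrix n n R) :
    traceSnd (A ⊗ₖ B) ⊗ₖ traceFst (A ⊗ₖ B) = (A ⊗ₖ B).trace • (A ⊗ₖ B) := by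
  rw [traceSnd_kronecker, traceFst_kronecker, smul_kronecker, kronecker_smul, smul_smul,
    trace_kronecker, mul_comm]

end Matrix

open Matrix

section Divergence

variable {m : Type*} [Fintype m] [DecidableEq m]

lemma log_det_add_trace_inv_le_dvg [Nonempty m] {K S T : Matrix m m ℝ} {c : ℝ} (hK : K.PosDef)
    (hT : (T - c • 1).PosSemidef) (hST : ∀ i j, |S i j - T i j| ≤ c / (2 * Fintype.card m ^ 2)) :
    log K.det + c / 2 * K⁻¹.trace ≤ dvg K S := by
  have hsplit : (K⁻¹ * S).trace =
      (K⁻¹ * (T - c • 1)).trace + c * K⁻¹.trace + (K⁻¹ * (S - T)).trace := by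
    simp only [Matrix.mul_sub, Matrix.mul_smul, Matrix.mul_one, trace_sub, trace_smul, smul_eq_mul]
    ring
  have hfirst := hK.inv.posSemidef.trace_mul_nonneg hT
  have hlast := hK.inv.posSemidef.abs_trace_mul_le (E := S - T) hST
  have hcard : (Fintype.card m : ℝ) ^ 2 * (c / (2 * Fintype.card m ^ 2)) = c / 2 := by
    field_simp
  rw [hcard] at hlast
  rw [dvg, hsplit]
  linarith [(abs_le.mp hlast).1]

lemma tendsto_dvg {ι : Type*} {l : Filter ι} {K S : ι → Matrix m m ℝ} {L T : Matrix m m ℝ}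
    (hK : Tendsto K l (𝓝 L)) (hS : Tendsto S l (𝓝 T)) (hL : L.det ≠ 0) :
    Tendsto (fun n => dvg (K n) (S n)) l (𝓝 (dvg L T)) := by
  have hinv : ContinuousAt Inv.inv L :=
    continuousAt_matrix_inv _ (NormedRing.inverse_continuousAt (isUnit_iff_ne_zero.mpr hL).unit)
  exact ((continuousAt_log hL).tendsto.comp ((continuous_id.matrix_det.tendsto L).comp hK)).add
    ((continuous_id.matrix_trace.tendsto _).comp ((hinv.tendsto.comp hK).mul hS))

lemma eventually_mem_isCompact_posDef [Nonempty m] {ι : Type*} {l : Filter ι}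
    {K S : ι → Matrix m m ℝ} {T : Matrix m m ℝ} {D : ℝ} (hS : Tendsto S l (𝓝 T)) (hT : T.PosDef)
    (hK : ∀ n, (K n).PosDef) (hD : ∀ᶠ n in l, dvg (K n) (S n) ≤ D) :
    ∃ s : Set (Matrix m m ℝ), IsCompact s ∧ (∀ M ∈ s, M.PosDef) ∧ ∀ᶠ n in l, K n ∈ s := by
  obtain ⟨c, hc, hTc⟩ := hT.exists_pos_sub_smul_one_posSemidef
  obtain ⟨s, hs, hspd, hmem⟩ :=
    exists_isCompact_posDef_of_log_det_add_trace_inv_le (m := m) (half_pos hc) D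
  have hε : 0 < c / (2 * Fintype.card m ^ 2) := by positivity
  have hclose : ∀ᶠ n in l, ∀ i j, |S n i j - T i j| ≤ c / (2 * Fintype.card m ^ 2) :=
    eventually_all.mpr fun i => eventually_all.mpr fun j =>
      (Metric.tendsto_nhds.mp (((continuous_apply_apply i j).tendsto T).comp hS) _ hε).mono
        fun n hn => (Real.dist_eq _ _ ▸ hn).le
  refine ⟨s, hs, hspd, (hD.and hclose).mono fun n ⟨hDn, hn⟩ => hmem _ (hK n) ?_⟩
  exact (log_det_add_trace_inv_le_dvg (hK n) hTc hn).trans hDn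

end Divergence

section Separable

variable {p1 p2 : ℕ}

lemma sep_eq_kronecker (A : Matrix (Fin p1) (Fin p1) ℝ) (B : Matrix (Fin p2) (Fin p2) ℝ) :
    sep A B = A ⊗ₖ B := rfl

lemma sepPD_iff [Nonempty (Fin p1)] [Nonempty (Fin p2)]
    {K : Matrix (Fin p1 × Fin p2) (Fin p1 × Fin p2) ℝ} :
    SepPD K ↔ K.PosDef ∧ K.trace • K = sep K.traceSnd K.traceFst := by
  constructor
  · rintro ⟨A, B, hA, hB, rfl⟩
    exact ⟨hA.kronecker hB, (kronecker_traceSnd_traceFst A B).symm⟩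
  · rintro ⟨hK, hsep⟩
    refine ⟨K.trace⁻¹ • K.traceSnd, K.traceFst, hK.traceSnd.smul (inv_pos.mpr hK.trace_pos),
      hK.traceFst, ?_⟩
    rw [sep_eq_kronecker, smul_kronecker, ← sep_eq_kronecker, ← hsep, smul_smul,
      inv_mul_cancel₀ hK.trace_pos.ne', one_smul]

lemma SepPD.of_tendsto [Nonempty (Fin p1)] [Nonempty (Fin p2)] {ι : Type*} {l : Filter ι}
    [l.NeBot] {K : ι → Matrix (Fin p1 × Fin p2) (Fin p1 × Fin p2) ℝ}
    {L : Matrix (Fin p1 × Fin p2) (Fin p1 × Fin p2) ℝ}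
    (hK : ∀ᶠ n in l, SepPD (K n)) (hKL : Tendsto K l (𝓝 L)) (hL : L.PosDef) : SepPD L := by
  refine sepPD_iff.mpr ⟨hL, ?_⟩
  have hclosed : IsClosed {M : Matrix (Fin p1 × Fin p2) (Fin p1 × Fin p2) ℝ |
      M.trace • M = sep M.traceSnd M.traceFst} :=
    isClosed_eq (continuous_id.matrix_trace.smul continuous_id)
      (continuous_matrix fun _ _ =>
        (continuous_traceSnd.matrix_elem _ _).mul (continuous_traceFst.matrix_elem _ _))
  exact hclosed.mem_of_tendsto hKL (hK.mono fun n h => (sepPD_iff.mp h).2)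

end Separable

theorem stmt16_general (p1 p2 : ℕ)
    (S : ℕ → Matrix (Fin p1 × Fin p2) (Fin p1 × Fin p2) ℝ)
    (Sig : Matrix (Fin p1 × Fin p2) (Fin p1 × Fin p2) ℝ) (hSig : Sig.PosDef)
    (hconv : ∀ x y, Tendsto (fun n => S n x y) atTop (nhds (Sig x y)))
    (K : ℕ → Matrix (Fin p1 × Fin p2) (Fin p1 × Fin p2) ℝ)
    (hKsep : ∀ n, SepPD (K n))
    (hKmin : ∀ n, ∀ K', SepPD K' → dvg (K n) (S n) ≤ dvg K' (S n))
    (Klim : Matrix (Fin p1 × Fin p2) (Fin p1 × Fin p2) ℝ)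
    (hKlimsep : SepPD Klim)
    (huniq : ∀ K', SepPD K' → (∀ K'', SepPD K'' → dvg K' Sig ≤ dvg K'' Sig) → K' = Klim) :
    ∀ x y, Tendsto (fun n => K n x y) atTop (nhds (Klim x y)) := by
  intro x y
  have : Nonempty (Fin p1) := ⟨x.1⟩
  have : Nonempty (Fin p2) := ⟨x.2⟩
  have hS : Tendsto S atTop (𝓝 Sig) := tendsto_pi_nhds.mpr fun i => tendsto_pi_nhds.mpr (hconv i)
  have hdet {M : Matrix (Fin p1 × Fin p2) (Fin p1 × Fin p2) ℝ} (hM : SepPD M) : M.det ≠ 0 :=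
    (sepPD_iff.mp hM).1.det_pos.ne'
  have hbdd : ∀ᶠ n in atTop, dvg (K n) (S n) ≤ dvg Klim Sig + 1 :=
    ((tendsto_dvg tendsto_const_nhds hS (hdet hKlimsep)).eventually_le_const (lt_add_one _)).mono
      fun n hn => (hKmin n Klim hKlimsep).trans hn
  obtain ⟨s, hs, hspd, hKs⟩ :=
    eventually_mem_isCompact_posDef hS hSig (fun n => (sepPD_iff.mp (hKsep n)).1) hbdd
  have hlim : Tendsto K atTop (𝓝 Klim) := by
    refine hs.tendsto_nhds_of_unique_mapClusterPt hKs fun L hL hcl => ?_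
    -- `F` plays the role of a subsequence along which `K` converges to `L`
    set F := comap K (𝓝 L) ⊓ atTop
    have : F.NeBot := neBot_inf_comap_iff_map'.mpr hcl
    have hKF : Tendsto K F (𝓝 L) := tendsto_comap.mono_left inf_le_left
    have hSF : Tendsto S F (𝓝 Sig) := hS.mono_left inf_le_right
    refine huniq L (.of_tendsto (.of_forall fun n => hKsep n) hKF (hspd L hL)) fun K' hK' => ?_
    exact le_of_tendsto_of_tendsto' (tendsto_dvg hKF hSF (hspd L hL).det_pos.ne')
      (tendsto_dvg tendsto_const_nhds hSF (hdet hK')) fun n => hKmin n K' hK'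
  exact ((continuous_apply_apply x y).tendsto Klim).comp hlim

theorem stmt16 (p1 p2 : ℕ) (hp1 : 0 < p1) (hp2 : 0 < p2)
    (S : ℕ → Matrix (Fin p1 × Fin p2) (Fin p1 × Fin p2) ℝ)
    (hSpd : ∀ n, (S n).PosDef)
    (Sig : Matrix (Fin p1 × Fin p2) (Fin p1 × Fin p2) ℝ) (hSig : Sig.PosDef)
    (hconv : ∀ x y, Tendsto (fun n => S n x y) atTop (nhds (Sig x y)))
    (K : ℕ → Matrix (Fin p1 × Fin p2) (Fin p1 × Fin p2) ℝ)
    (hKsep : ∀ n, SepPD (K n))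
    (hKmin : ∀ n, ∀ K', SepPD K' → dvg (K n) (S n) ≤ dvg K' (S n))
    (Klim : Matrix (Fin p1 × Fin p2) (Fin p1 × Fin p2) ℝ)
    (hKlimsep : SepPD Klim)
    (hKlimmin : ∀ K', SepPD K' → dvg Klim Sig ≤ dvg K' Sig)
    (huniq : ∀ K', SepPD K' → (∀ K'', SepPD K'' → dvg K' Sig ≤ dvg K'' Sig) → K' = Klim) :
    ∀ x y, Tendsto (fun n => K n x y) atTop (nhds (Klim x y)) :=
  stmt16_general p1 p2 S Sig hSig hconv K hKsep hKmin Klim hKlimsep huniq
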